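/- arXiv:2402.07419 — 4 statements merged into one kernel-verified Lean document; each statement's English description precedes it below -/
import Mathlib

section
/- Frontdoor adjustment: In an SCM with observed variables X → S → Y, a latent confounder U affecting both X and Y, and no other edges among observed variables, the causal effect is identifiable as P(y | do(x)) = ∑_s P(s | x) ∑_{x'} P(x') P(y | x', s), provided the observational distribution is strictly positive. -/
open Finset

private def pushf {α β : Type*} [Fintype α] [DecidableEq β] (f : α → β) (w : α → ℝ) (b : β) : ℝ :=
  ∑ a, if f a = b then w a else 0

private lemma pushf_nonneg {α β : Type*} [Fintype α] [DecidableEq β] (f : α → β) (w : α → ℝ)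
    (hw : ∀ a, 0 ≤ w a) (b : β) : 0 ≤ pushf f w b :=
  Finset.sum_nonneg fun a _ => by split_ifs; exacts [hw a, le_rfl]

private lemma sum_pushf {α β : Type*} [Fintype α] [Fintype β] [DecidableEq β] (f : α → β)
    (w : α → ℝ) : ∑ b, pushf f w b = ∑ a, w a := by
  unfold pushf
  rw [Finset.sum_comm]
  simp

private lemma sum_pushf_mul {α β : Type*} [Fintype α] [Fintype β] [DecidableEq β] (f : α → β)
    (w : α → ℝ) (g : β → ℝ) : ∑ b, pushf f w b * g b = ∑ a, w a * g (f a) := by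
  unfold pushf
  simp only [Finset.sum_mul, ite_mul, zero_mul]
  rw [Finset.sum_comm]
  simp

/-- Frontdoor adjustment: in the SCM `X → S → Y` with latent confounder `U` affecting both
`X` and `Y`, and strictly positive observational distribution `P`,
`P(y | do(x)) = ∑ s, P(s|x) * ∑ x', P(x') * P(y | x', s)`. -/
theorem stmt_5 (Ut Xt St Yt NX NS NY : Type)
    [Fintype Ut] [Fintype Xt] [Fintype St] [Fintype Yt]
    [Fintype NX] [Fintype NS] [Fintype NY]
    [DecidableEq Xt] [DecidableEq St] [DecidableEq Yt]
    (μU : Ut → ℝ) (μX : NX → ℝ) (μS : NS → ℝ) (μY : NY → ℝ)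
    (hμU0 : ∀ u, 0 ≤ μU u) (hμX0 : ∀ u, 0 ≤ μX u)
    (hμS0 : ∀ u, 0 ≤ μS u) (hμY0 : ∀ u, 0 ≤ μY u)
    (hμU1 : ∑ u, μU u = 1) (hμX1 : ∑ u, μX u = 1)
    (hμS1 : ∑ u, μS u = 1) (hμY1 : ∑ u, μY u = 1)
    (fX : Ut → NX → Xt) (fS : Xt → NS → St) (fY : St → Ut → NY → Yt)
    (P : Xt → St → Yt → ℝ)
    (hP : ∀ x s y, P x s y =
      ∑ u, ∑ nx, ∑ ns, ∑ ny,
        if fX u nx = x ∧ fS x ns = s ∧ fY s u ny = y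
        then μU u * μX nx * μS ns * μY ny else 0)
    (Pdo : Xt → Yt → ℝ)
    (hPdo : ∀ x y, Pdo x y =
      ∑ u, ∑ ns, ∑ ny,
        if fY (fS x ns) u ny = y then μU u * μS ns * μY ny else 0)
    (hpos : ∀ x s y, 0 < P x s y) :
    ∀ x y, Pdo x y =
      ∑ s, ((∑ y', P x s y') / (∑ s', ∑ y', P x s' y')) *
        ∑ x', (∑ s', ∑ y', P x' s' y') * (P x' s y / ∑ y', P x' s y') := by
  classical
  intro x y
  set aa : Ut → Xt → ℝ := fun u x' => pushf (fX u) μX x' with haa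
  set bb : Xt → St → ℝ := fun x' s => pushf (fS x') μS s with hbb
  set cc : St → Ut → Yt → ℝ := fun s u y' => pushf (fY s u) μY y' with hcc
  -- Factorization of P
  have hPf : ∀ x' s y', P x' s y' = bb x' s * ∑ u, μU u * (aa u x' * cc s u y') := by
    intro x' s y'
    rw [hP]
    have key : ∀ (u : Ut) (nx : NX) (ns : NS) (ny : NY),
        (if fX u nx = x' ∧ fS x' ns = s ∧ fY s u ny = y'
          then μU u * μX nx * μS ns * μY ny else 0)
        = (if fS x' ns = s then μS ns else 0) *
            (μU u * ((if fX u nx = x' then μX nx else 0) *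
              (if fY s u ny = y' then μY ny else 0))) := by
      intro u nx ns ny
      by_cases h1 : fX u nx = x' <;> by_cases h2 : fS x' ns = s <;>
        by_cases h3 : fY s u ny = y' <;> simp [h1, h2, h3] <;> ring
    simp only [key]
    simp only [← Finset.mul_sum, ← Finset.sum_mul]
    simp only [haa, hbb, hcc, pushf]
  -- Factorization of Pdo
  have hPdof : Pdo x y = ∑ s, bb x s * ∑ u, μU u * cc s u y := by
    rw [hPdo]
    have key : ∀ (u : Ut) (ns : NS),
        (∑ ny, if fY (fS x ns) u ny = y then μU u * μS ns * μY ny else 0)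
        = μU u * (μS ns * pushf (fY (fS x ns) u) μY y) := by
      intro u ns
      simp only [pushf, Finset.mul_sum]
      exact Finset.sum_congr rfl fun ny _ => by split_ifs <;> ring
    simp only [key]
    simp only [← Finset.mul_sum]
    have key2 : ∀ u : Ut, (∑ ns, μS ns * pushf (fY (fS x ns) u) μY y)
        = ∑ s, pushf (fS x) μS s * pushf (fY s u) μY y :=
      fun u => (sum_pushf_mul (fS x) μS (fun s => pushf (fY s u) μY y)).symm
    simp only [key2, Finset.mul_sum]
    rw [Finset.sum_comm]
    refine Finset.sum_congr rfl fun s _ => ?_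
    exact Finset.sum_congr rfl fun u _ => by simp only [hbb, hcc]; ring
  -- marginals
  have hccone : ∀ s u, (∑ y', cc s u y') = 1 := by
    intro s u; simp only [hcc]; rw [sum_pushf, hμY1]
  have haaone : ∀ u, (∑ x', aa u x') = 1 := by
    intro u; simp only [haa]; rw [sum_pushf, hμX1]
  have hbbone : ∀ x', (∑ s', bb x' s') = 1 := by
    intro x'; simp only [hbb]; rw [sum_pushf, hμS1]
  have hsum_y : ∀ x' s, ∑ y', P x' s y' = bb x' s * ∑ u, μU u * aa u x' := by
    intro x' s
    simp only [hPf]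
    rw [← Finset.mul_sum]
    congr 1
    rw [Finset.sum_comm]
    refine Finset.sum_congr rfl fun u _ => ?_
    simp only [← Finset.mul_sum]
    rw [hccone s u]; ring
  have hsum_sy : ∀ x', ∑ s', ∑ y', P x' s' y' = ∑ u, μU u * aa u x' := by
    intro x'
    simp only [hsum_y]
    rw [← Finset.sum_mul, hbbone, one_mul]
  -- nonnegativity / positivity
  have hbb0 : ∀ x' s, 0 ≤ bb x' s := fun x' s => pushf_nonneg _ _ hμS0 s
  have haa0 : ∀ u x', 0 ≤ aa u x' := fun u x' => pushf_nonneg _ _ hμX0 x'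
  have hA0 : ∀ x', 0 ≤ ∑ u, μU u * aa u x' :=
    fun x' => Finset.sum_nonneg fun u _ => mul_nonneg (hμU0 u) (haa0 u x')
  have hq0 : ∀ x' s, 0 ≤ ∑ u, μU u * (aa u x' * cc s u y) :=
    fun x' s => Finset.sum_nonneg fun u _ =>
      mul_nonneg (hμU0 u) (mul_nonneg (haa0 u x') (pushf_nonneg _ _ hμY0 y))
  have hbbpos : ∀ x' s, 0 < bb x' s := by
    intro x' s
    have h := hpos x' s y
    rw [hPf] at h
    rcases mul_pos_iff.mp h with ⟨h1, _⟩ | ⟨h1, _⟩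
    · exact h1
    · linarith [hbb0 x' s]
  have hApos : ∀ x', 0 < ∑ u, μU u * aa u x' := by
    intro x'
    obtain ⟨ns0⟩ : Nonempty NS := by
      by_contra h
      rw [not_nonempty_iff] at h
      rw [Finset.univ_eq_empty, Finset.sum_empty] at hμS1
      norm_num at hμS1
    have h : 0 < ∑ y', P x' (fS x ns0) y' :=
      Finset.sum_pos (fun y' _ => hpos x' (fS x ns0) y') ⟨y, Finset.mem_univ y⟩
    rw [hsum_y] at h
    rcases mul_pos_iff.mp h with ⟨_, h2⟩ | ⟨_, h2⟩
    · exact h2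
    · linarith [hA0 x']
  -- final computation
  rw [hPdof]
  refine Finset.sum_congr rfl fun s _ => ?_
  rw [hsum_y x s, hsum_sy x, mul_div_assoc, div_self (ne_of_gt (hApos x)), mul_one]
  congr 1
  have hterm : ∀ x', (∑ s', ∑ y', P x' s' y') * (P x' s y / ∑ y', P x' s y')
      = ∑ u, μU u * (aa u x' * cc s u y) := by
    intro x'
    rw [hsum_y x' s, hsum_sy x', hPf x' s y,
      mul_div_mul_left _ _ (ne_of_gt (hbbpos x' s)), mul_comm,
      div_mul_cancel₀ _ (ne_of_gt (hApos x'))]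
  simp only [hterm]
  rw [Finset.sum_comm]
  refine Finset.sum_congr rfl fun u _ => ?_
  simp only [← Finset.mul_sum, ← Finset.sum_mul]
  rw [haaone u, one_mul]
end

section
/- C-component factorization for two components: Let an SCM over discrete observed variables V have latent structure such that V partitions into c-components S_1 and S_2 (no latent confounder connects S_1 to S_2). Then the observational joint factorizes as P(v) = Q_1(s_1; v) · Q_2(s_2; v), where Q_j(s_j; v) = ∏_{V_i ∈ S_j} P(v_i | v_π^{(i-1)}) is the product of the conditionals of variables in S_j given all their topological predecessors, and moreover Q_j(s_j; v) = P(s_j | do(v \ s_j)). -/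
open Finset

private lemma stmt9_sep {N0 N1 N2 N3 : Type} [Fintype N0] [Fintype N1] [Fintype N2] [Fintype N3]
    (f : N0 → ℝ) (g : N1 → ℝ) (h : N2 → ℝ) (k : N3 → ℝ) (p q : ℝ) :
    ∑ n0, ∑ n1, ∑ n2, ∑ n3, (p * f n0 * h n2) * (q * g n1 * k n3) =
      (p * (∑ n0, f n0) * (∑ n2, h n2)) * (q * (∑ n1, g n1) * (∑ n3, k n3)) := by
  have h1 : (∑ n0, ∑ n1, ∑ n2, ∑ n3, (p * f n0 * h n2) * (q * g n1 * k n3)) =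
      ∑ n0, ∑ n1, ∑ n2, ∑ n3, (p * q) * (f n0 * (g n1 * (h n2 * k n3))) :=
    Finset.sum_congr rfl fun _ _ => Finset.sum_congr rfl fun _ _ =>
      Finset.sum_congr rfl fun _ _ => Finset.sum_congr rfl fun _ _ => by ring
  rw [h1]
  simp only [← Finset.mul_sum, ← Finset.sum_mul]
  ring

private lemma stmt9_split (A B C D : Prop) [Decidable A] [Decidable B] [Decidable C] [Decidable D]
    (p q r s t v : ℝ) :
    (if A ∧ B ∧ C ∧ D then p * q * r * s * t * v else 0) =
      (p * (if A then r else 0) * (if C then t else 0)) *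
        (q * (if B then s else 0) * (if D then v else 0)) := by
  by_cases hA : A <;> by_cases hB : B <;> by_cases hC : C <;> by_cases hD : D <;>
    simp [hA, hB, hC, hD] <;> ring

private lemma stmt9_split2 (A C : Prop) [Decidable A] [Decidable C] (p q r s t v : ℝ) :
    (if A ∧ C then p * q * r * s * t * v else 0) =
      (p * (if A then r else 0) * (if C then t else 0)) * (q * s * v) := by
  by_cases hA : A <;> by_cases hC : C <;> simp [hA, hC] <;> ring

private lemma stmt9_split3 (B D : Prop) [Decidable B] [Decidable D] (p q r s t v : ℝ) :
    (if B ∧ D then p * q * r * s * t * v else 0) =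
      (p * r * t) * (q * (if B then s else 0) * (if D then v else 0)) := by
  by_cases hB : B <;> by_cases hD : D <;> simp [hB, hD] <;> ring

/-- C-component factorization for two components, instantiated on the four-node graph
`X → W₁ → W₂ → Y` with latent confounders `X ↔ W₂` (via `U₁`) and `W₁ ↔ Y` (via `U₂`).
The c-components are `S₁ = {X, W₂}` and `S₂ = {W₁, Y}`. The observational joint
factorizes as `P(v) = Q₁(s₁; v) · Q₂(s₂; v)` where each `Q_j` is the product of the
conditionals of the variables of `S_j` given all their topological predecessors, and
moreover `Q₁ = P(x, w₂ | do(w₁, y))` and `Q₂ = P(w₁, y | do(x, w₂))`. -/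
theorem stmt_9 (U1 U2 Xt W1t W2t Yt N0 N1 N2 N3 : Type)
    [Fintype U1] [Fintype U2] [Fintype Xt] [Fintype W1t] [Fintype W2t] [Fintype Yt]
    [Fintype N0] [Fintype N1] [Fintype N2] [Fintype N3]
    [DecidableEq Xt] [DecidableEq W1t] [DecidableEq W2t] [DecidableEq Yt]
    (ν1 : U1 → ℝ) (ν2 : U2 → ℝ) (μ0 : N0 → ℝ) (μ1 : N1 → ℝ) (μ2 : N2 → ℝ) (μ3 : N3 → ℝ)
    (hν10 : ∀ u, 0 ≤ ν1 u) (hν20 : ∀ u, 0 ≤ ν2 u)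
    (hμ00 : ∀ u, 0 ≤ μ0 u) (hμ10 : ∀ u, 0 ≤ μ1 u)
    (hμ20 : ∀ u, 0 ≤ μ2 u) (hμ30 : ∀ u, 0 ≤ μ3 u)
    (hν11 : ∑ u, ν1 u = 1) (hν21 : ∑ u, ν2 u = 1)
    (hμ01 : ∑ u, μ0 u = 1) (hμ11 : ∑ u, μ1 u = 1)
    (hμ21 : ∑ u, μ2 u = 1) (hμ31 : ∑ u, μ3 u = 1)
    (gX : U1 → N0 → Xt) (g1 : Xt → U2 → N1 → W1t)
    (g2 : W1t → U1 → N2 → W2t) (g3 : W2t → U2 → N3 → Yt)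
    (P : Xt → W1t → W2t → Yt → ℝ)
    (hP : ∀ x w1 w2 y, P x w1 w2 y =
      ∑ u1, ∑ u2, ∑ n0, ∑ n1, ∑ n2, ∑ n3,
        if gX u1 n0 = x ∧ g1 x u2 n1 = w1 ∧ g2 w1 u1 n2 = w2 ∧ g3 w2 u2 n3 = y
        then ν1 u1 * ν2 u2 * μ0 n0 * μ1 n1 * μ2 n2 * μ3 n3 else 0)
    (hpos : ∀ x w1 w2 y, 0 < P x w1 w2 y)
    (Pdo1 : W1t → Yt → Xt → W2t → ℝ)
    (hPdo1 : ∀ w1 yv x w2, Pdo1 w1 yv x w2 =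
      ∑ u1, ∑ u2, ∑ n0, ∑ n1, ∑ n2, ∑ n3,
        if gX u1 n0 = x ∧ g2 w1 u1 n2 = w2
        then ν1 u1 * ν2 u2 * μ0 n0 * μ1 n1 * μ2 n2 * μ3 n3 else 0)
    (Pdo2 : Xt → W2t → W1t → Yt → ℝ)
    (hPdo2 : ∀ x w2 w1 y, Pdo2 x w2 w1 y =
      ∑ u1, ∑ u2, ∑ n0, ∑ n1, ∑ n2, ∑ n3,
        if g1 x u2 n1 = w1 ∧ g3 w2 u2 n3 = y
        then ν1 u1 * ν2 u2 * μ0 n0 * μ1 n1 * μ2 n2 * μ3 n3 else 0) :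
    ∀ x w1 w2 y yv,
      -- Q₁(s₁; v) = P(x) · P(w₂ | x, w₁)  and  Q₂(s₂; v) = P(w₁ | x) · P(y | x, w₁, w₂)
      (P x w1 w2 y =
        ((∑ w1', ∑ w2', ∑ y', P x w1' w2' y') *
           ((∑ y', P x w1 w2 y') / (∑ w2', ∑ y', P x w1 w2' y'))) *
        (((∑ w2', ∑ y', P x w1 w2' y') / (∑ w1', ∑ w2', ∑ y', P x w1' w2' y')) *
           (P x w1 w2 y / (∑ y', P x w1 w2 y')))) ∧
      (Pdo1 w1 yv x w2 =
        (∑ w1', ∑ w2', ∑ y', P x w1' w2' y') *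
          ((∑ y', P x w1 w2 y') / (∑ w2', ∑ y', P x w1 w2' y'))) ∧
      (Pdo2 x w2 w1 y =
        ((∑ w2', ∑ y', P x w1 w2' y') / (∑ w1', ∑ w2', ∑ y', P x w1' w2' y')) *
          (P x w1 w2 y / (∑ y', P x w1 w2 y'))) := by
  intro x w1 w2 y yv
  haveI : Nonempty W1t := ⟨w1⟩
  haveI : Nonempty W2t := ⟨w2⟩
  haveI : Nonempty Yt := ⟨y⟩
  -- abbreviated one-variable kernels
  set a : U1 → ℝ := fun u1 => ∑ n0, if gX u1 n0 = x then μ0 n0 else 0 with ha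
  set b : W1t → U2 → ℝ := fun w1' u2 => ∑ n1, if g1 x u2 n1 = w1' then μ1 n1 else 0 with hb
  set c : W1t → W2t → U1 → ℝ := fun w1' w2' u1 => ∑ n2, if g2 w1' u1 n2 = w2' then μ2 n2 else 0 with hc
  set d : W2t → Yt → U2 → ℝ := fun w2' y' u2 => ∑ n3, if g3 w2' u2 n3 = y' then μ3 n3 else 0 with hd
  -- nonnegativity
  have hann : ∀ u1, 0 ≤ a u1 := fun u1 =>
    Finset.sum_nonneg fun n0 _ => by by_cases h : gX u1 n0 = x <;> simp [h, hμ00 n0]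
  have hbnn : ∀ w1' u2, 0 ≤ b w1' u2 := fun w1' u2 =>
    Finset.sum_nonneg fun n1 _ => by by_cases h : g1 x u2 n1 = w1' <;> simp [h, hμ10 n1]
  have hcnn : ∀ w1' w2' u1, 0 ≤ c w1' w2' u1 := fun w1' w2' u1 =>
    Finset.sum_nonneg fun n2 _ => by by_cases h : g2 w1' u1 n2 = w2' <;> simp [h, hμ20 n2]
  have hdnn : ∀ w2' y' u2, 0 ≤ d w2' y' u2 := fun w2' y' u2 =>
    Finset.sum_nonneg fun n3 _ => by by_cases h : g3 w2' u2 n3 = y' <;> simp [h, hμ30 n3]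
  -- sum-to-one
  have hbsum : ∀ u2, ∑ w1', b w1' u2 = 1 := by
    intro u2; rw [hb]; dsimp only
    rw [Finset.sum_comm]; simp [Finset.sum_ite_eq, hμ11]
  have hcsum : ∀ w1' u1, ∑ w2', c w1' w2' u1 = 1 := by
    intro w1' u1; rw [hc]; dsimp only
    rw [Finset.sum_comm]; simp [Finset.sum_ite_eq, hμ21]
  have hdsum : ∀ w2' u2, ∑ y', d w2' y' u2 = 1 := by
    intro w2' u2; rw [hd]; dsimp only
    rw [Finset.sum_comm]; simp [Finset.sum_ite_eq, hμ31]
  -- key factorization of the joint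
  have key : ∀ w1' w2' y', P x w1' w2' y' =
      (∑ u1, ν1 u1 * a u1 * c w1' w2' u1) * (∑ u2, ν2 u2 * b w1' u2 * d w2' y' u2) := by
    intro w1' w2' y'
    rw [hP]
    have e : ∀ (u1 : U1) (u2 : U2),
        (∑ n0, ∑ n1, ∑ n2, ∑ n3,
          if gX u1 n0 = x ∧ g1 x u2 n1 = w1' ∧ g2 w1' u1 n2 = w2' ∧ g3 w2' u2 n3 = y'
          then ν1 u1 * ν2 u2 * μ0 n0 * μ1 n1 * μ2 n2 * μ3 n3 else 0)
        = (ν1 u1 * a u1 * c w1' w2' u1) * (ν2 u2 * b w1' u2 * d w2' y' u2) := by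
      intro u1 u2
      have h := stmt9_sep (fun n0 => if gX u1 n0 = x then μ0 n0 else 0)
        (fun n1 => if g1 x u2 n1 = w1' then μ1 n1 else 0)
        (fun n2 => if g2 w1' u1 n2 = w2' then μ2 n2 else 0)
        (fun n3 => if g3 w2' u2 n3 = y' then μ3 n3 else 0) (ν1 u1) (ν2 u2)
      rw [← h]
      exact Finset.sum_congr rfl fun n0 _ => Finset.sum_congr rfl fun n1 _ =>
        Finset.sum_congr rfl fun n2 _ => Finset.sum_congr rfl fun n3 _ =>
          stmt9_split _ _ _ _ _ _ _ _ _ _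
    calc (∑ u1, ∑ u2, ∑ n0, ∑ n1, ∑ n2, ∑ n3,
          if gX u1 n0 = x ∧ g1 x u2 n1 = w1' ∧ g2 w1' u1 n2 = w2' ∧ g3 w2' u2 n3 = y'
          then ν1 u1 * ν2 u2 * μ0 n0 * μ1 n1 * μ2 n2 * μ3 n3 else 0)
        = ∑ u1, ∑ u2, (ν1 u1 * a u1 * c w1' w2' u1) * (ν2 u2 * b w1' u2 * d w2' y' u2) :=
          Finset.sum_congr rfl fun u1 _ => Finset.sum_congr rfl fun u2 _ => e u1 u2
      _ = _ := (Finset.sum_mul_sum _ _ _ _).symm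
  -- marginals
  have hS1 : ∀ w1' w2', (∑ y', P x w1' w2' y') =
      (∑ u1, ν1 u1 * a u1 * c w1' w2' u1) * (∑ u2, ν2 u2 * b w1' u2) := by
    intro w1' w2'
    calc (∑ y', P x w1' w2' y')
        = ∑ y', (∑ u1, ν1 u1 * a u1 * c w1' w2' u1) * (∑ u2, ν2 u2 * b w1' u2 * d w2' y' u2) :=
          Finset.sum_congr rfl fun y' _ => key w1' w2' y'
      _ = (∑ u1, ν1 u1 * a u1 * c w1' w2' u1) * ∑ y', ∑ u2, ν2 u2 * b w1' u2 * d w2' y' u2 :=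
          (Finset.mul_sum _ _ _).symm
      _ = _ := by
          congr 1
          rw [Finset.sum_comm]
          refine Finset.sum_congr rfl fun u2 _ => ?_
          rw [← Finset.mul_sum, hdsum w2' u2, mul_one]
  have hS2 : ∀ w1', (∑ w2', ∑ y', P x w1' w2' y') =
      (∑ u1, ν1 u1 * a u1) * (∑ u2, ν2 u2 * b w1' u2) := by
    intro w1'
    calc (∑ w2', ∑ y', P x w1' w2' y')
        = ∑ w2', (∑ u1, ν1 u1 * a u1 * c w1' w2' u1) * (∑ u2, ν2 u2 * b w1' u2) :=
          Finset.sum_congr rfl fun w2' _ => hS1 w1' w2'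
      _ = (∑ w2', ∑ u1, ν1 u1 * a u1 * c w1' w2' u1) * (∑ u2, ν2 u2 * b w1' u2) :=
          (Finset.sum_mul _ _ _).symm
      _ = _ := by
          congr 1
          rw [Finset.sum_comm]
          refine Finset.sum_congr rfl fun u1 _ => ?_
          rw [← Finset.mul_sum, hcsum w1' u1, mul_one]
  have hS3 : (∑ w1', ∑ w2', ∑ y', P x w1' w2' y') = ∑ u1, ν1 u1 * a u1 := by
    calc (∑ w1', ∑ w2', ∑ y', P x w1' w2' y')
        = ∑ w1', (∑ u1, ν1 u1 * a u1) * (∑ u2, ν2 u2 * b w1' u2) :=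
          Finset.sum_congr rfl fun w1' _ => hS2 w1'
      _ = (∑ u1, ν1 u1 * a u1) * ∑ w1', ∑ u2, ν2 u2 * b w1' u2 := (Finset.mul_sum _ _ _).symm
      _ = (∑ u1, ν1 u1 * a u1) * 1 := by
          congr 1
          rw [Finset.sum_comm]
          calc (∑ u2, ∑ w1', ν2 u2 * b w1' u2)
              = ∑ u2, ν2 u2 * ∑ w1', b w1' u2 :=
                Finset.sum_congr rfl fun u2 _ => (Finset.mul_sum _ _ _).symm
            _ = ∑ u2, ν2 u2 := by
                refine Finset.sum_congr rfl fun u2 _ => ?_; rw [hbsum u2, mul_one]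
            _ = 1 := hν21
      _ = _ := mul_one _
  -- positivity
  have hP3 : 0 < ∑ w1', ∑ w2', ∑ y', P x w1' w2' y' :=
    Finset.sum_pos (fun w1' _ => Finset.sum_pos (fun w2' _ =>
      Finset.sum_pos (fun y' _ => hpos x w1' w2' y') Finset.univ_nonempty)
      Finset.univ_nonempty) Finset.univ_nonempty
  have hA1 : 0 < ∑ u1, ν1 u1 * a u1 := hS3 ▸ hP3
  have hP2 : 0 < ∑ w2', ∑ y', P x w1 w2' y' :=
    Finset.sum_pos (fun w2' _ => Finset.sum_pos (fun y' _ => hpos x w1 w2' y')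
      Finset.univ_nonempty) Finset.univ_nonempty
  have hB2nn : 0 ≤ ∑ u2, ν2 u2 * b w1 u2 :=
    Finset.sum_nonneg fun u2 _ => mul_nonneg (hν20 u2) (hbnn w1 u2)
  have hB2 : 0 < ∑ u2, ν2 u2 * b w1 u2 := by
    rcases hB2nn.lt_or_eq with h | h
    · exact h
    · exfalso; rw [hS2 w1, ← h, mul_zero] at hP2; exact lt_irrefl 0 hP2
  have hP1 : 0 < ∑ y', P x w1 w2 y' :=
    Finset.sum_pos (fun y' _ => hpos x w1 w2 y') Finset.univ_nonempty
  have hQ1nn : 0 ≤ ∑ u1, ν1 u1 * a u1 * c w1 w2 u1 :=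
    Finset.sum_nonneg fun u1 _ => mul_nonneg (mul_nonneg (hν10 u1) (hann u1)) (hcnn w1 w2 u1)
  have hQ1 : 0 < ∑ u1, ν1 u1 * a u1 * c w1 w2 u1 := by
    rcases hQ1nn.lt_or_eq with h | h
    · exact h
    · exfalso; rw [hS1 w1 w2, ← h, zero_mul] at hP1; exact lt_irrefl 0 hP1
  -- do-expressions
  have keydo1 : Pdo1 w1 yv x w2 = ∑ u1, ν1 u1 * a u1 * c w1 w2 u1 := by
    rw [hPdo1]
    have e : ∀ (u1 : U1) (u2 : U2),
        (∑ n0, ∑ n1, ∑ n2, ∑ n3,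
          if gX u1 n0 = x ∧ g2 w1 u1 n2 = w2
          then ν1 u1 * ν2 u2 * μ0 n0 * μ1 n1 * μ2 n2 * μ3 n3 else 0)
        = (ν1 u1 * a u1 * c w1 w2 u1) * ν2 u2 := by
      intro u1 u2
      have h := stmt9_sep (fun n0 => if gX u1 n0 = x then μ0 n0 else 0) μ1
        (fun n2 => if g2 w1 u1 n2 = w2 then μ2 n2 else 0) μ3 (ν1 u1) (ν2 u2)
      rw [hμ11, hμ31, mul_one, mul_one] at h
      rw [← h]
      exact Finset.sum_congr rfl fun n0 _ => Finset.sum_congr rfl fun n1 _ =>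
        Finset.sum_congr rfl fun n2 _ => Finset.sum_congr rfl fun n3 _ =>
          stmt9_split2 _ _ _ _ _ _ _ _
    calc (∑ u1, ∑ u2, ∑ n0, ∑ n1, ∑ n2, ∑ n3,
          if gX u1 n0 = x ∧ g2 w1 u1 n2 = w2
          then ν1 u1 * ν2 u2 * μ0 n0 * μ1 n1 * μ2 n2 * μ3 n3 else 0)
        = ∑ u1, ∑ u2, (ν1 u1 * a u1 * c w1 w2 u1) * ν2 u2 :=
          Finset.sum_congr rfl fun u1 _ => Finset.sum_congr rfl fun u2 _ => e u1 u2
      _ = (∑ u1, ν1 u1 * a u1 * c w1 w2 u1) * (∑ u2, ν2 u2) := (Finset.sum_mul_sum _ _ _ _).symm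
      _ = _ := by rw [hν21, mul_one]
  have keydo2 : Pdo2 x w2 w1 y = ∑ u2, ν2 u2 * b w1 u2 * d w2 y u2 := by
    rw [hPdo2]
    have e : ∀ (u1 : U1) (u2 : U2),
        (∑ n0, ∑ n1, ∑ n2, ∑ n3,
          if g1 x u2 n1 = w1 ∧ g3 w2 u2 n3 = y
          then ν1 u1 * ν2 u2 * μ0 n0 * μ1 n1 * μ2 n2 * μ3 n3 else 0)
        = ν1 u1 * (ν2 u2 * b w1 u2 * d w2 y u2) := by
      intro u1 u2
      have h := stmt9_sep μ0 (fun n1 => if g1 x u2 n1 = w1 then μ1 n1 else 0) μ2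
        (fun n3 => if g3 w2 u2 n3 = y then μ3 n3 else 0) (ν1 u1) (ν2 u2)
      rw [hμ01, hμ21, mul_one, mul_one] at h
      rw [← h]
      exact Finset.sum_congr rfl fun n0 _ => Finset.sum_congr rfl fun n1 _ =>
        Finset.sum_congr rfl fun n2 _ => Finset.sum_congr rfl fun n3 _ =>
          stmt9_split3 _ _ _ _ _ _ _ _
    calc (∑ u1, ∑ u2, ∑ n0, ∑ n1, ∑ n2, ∑ n3,
          if g1 x u2 n1 = w1 ∧ g3 w2 u2 n3 = y
          then ν1 u1 * ν2 u2 * μ0 n0 * μ1 n1 * μ2 n2 * μ3 n3 else 0)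
        = ∑ u1, ∑ u2, ν1 u1 * (ν2 u2 * b w1 u2 * d w2 y u2) :=
          Finset.sum_congr rfl fun u1 _ => Finset.sum_congr rfl fun u2 _ => e u1 u2
      _ = (∑ u1, ν1 u1) * (∑ u2, ν2 u2 * b w1 u2 * d w2 y u2) := (Finset.sum_mul_sum _ _ _ _).symm
      _ = _ := by rw [hν11, one_mul]
  -- finish
  have hA1' := ne_of_gt hA1
  have hB2' := ne_of_gt hB2
  have hQ1' := ne_of_gt hQ1
  refine ⟨?_, ?_, ?_⟩
  · rw [hS3, hS2 w1, hS1 w1 w2, key w1 w2 y]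
    field_simp
  · rw [hS3, hS2 w1, hS1 w1 w2, keydo1]
    field_simp
  · rw [hS3, hS2 w1, hS1 w1 w2, keydo2, key w1 w2 y]
    field_simp
end

section
/- Identification in the single-c-component base case (ID step 6): Let G be an ADMG over V = X ∪ S with S a single c-component, no bidirected edge between any element of X and any element of S, and every edge from X into S directed. Then for any SCM compatible with G, P(s | do(x)) = ∏_{V_i ∈ S} P(v_i | v_π^{(i-1)}), where π is a topological order of G and v_π^{(i-1)} are the values of all predecessors of V_i (including intervened ones set to x). -/
open Finset

private lemma pisum {ι : Type} [Fintype ι] [DecidableEq ι] {δ : ι → Type} [∀ i, Fintype (δ i)]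
    (g : ∀ i, δ i → ℝ) :
    (∑ u : ∀ i, δ i, ∏ i, g i (u i)) = ∏ i, ∑ x, g i x := by
  rw [← Fintype.piFinset_univ, ← Finset.prod_univ_sum]

/-- ID base case (step 6): in a semi-Markovian SCM whose ADMG has `V = Xs ∪ S`, with `S`
a single c-component (bidirected-connected) and no latent confounder shared between `Xs`
and `S`, the interventional distribution satisfies
`P(s | do(x)) = ∏_{V_i ∈ S} P(v_i | v_π^{(i-1)})`, where predecessors are taken along a
topological order (here the order of `Fin n`) and intervened variables are fixed to `x`. -/
theorem stmt_10 (n m : ℕ) (X : Fin n → Type) [∀ i, Fintype (X i)] [∀ i, DecidableEq (X i)]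
    (Nt : Fin n → Type) [∀ i, Fintype (Nt i)]
    (Ut : Fin m → Type) [∀ c, Fintype (Ut c)]
    (μ : ∀ i, Nt i → ℝ) (ν : ∀ c, Ut c → ℝ)
    (hμ0 : ∀ i u, 0 ≤ μ i u) (hμ1 : ∀ i, ∑ u, μ i u = 1)
    (hν0 : ∀ c u, 0 ≤ ν c u) (hν1 : ∀ c, ∑ u, ν c u = 1)
    (E : Fin n → Fin n → Prop) [DecidableRel E]
    (hE : ∀ i j, E i j → i < j)
    (touch : Fin m → Finset (Fin n)) (htouch : ∀ c, (touch c).card = 2)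
    (f : ∀ i, (∀ j, X j) → (∀ c, Ut c) → Nt i → X i)
    (hdep : ∀ i v w U W u, (∀ j, E j i → v j = w j) →
      (∀ c, i ∈ touch c → U c = W c) → f i v U u = f i w W u)
    (Xs : Finset (Fin n))
    -- no bidirected edge between `Xs` and its complement `S`
    (hcross : ∀ c, (touch c ⊆ Xs) ∨ (∀ i ∈ touch c, i ∉ Xs))
    -- `S` is a single c-component
    (hconn : ∀ i j, i ∉ Xs → j ∉ Xs →
      Relation.ReflTransGen (fun a b => ∃ c, a ∈ touch c ∧ b ∈ touch c ∧ a ≠ b) i j)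
    (sol : (∀ c, Ut c) → (∀ i, Nt i) → ∀ i, X i)
    (hsol : ∀ U u i, sol U u i = f i (sol U u) U (u i))
    (P : (∀ i, X i) → ℝ)
    (hPdef : ∀ v, P v =
      ∑ U : ∀ c, Ut c, ∑ u : ∀ i, Nt i,
        if sol U u = v then (∏ c, ν c (U c)) * ∏ i, μ i (u i) else 0)
    (hpos : ∀ v, 0 < P v)
    (xa : ∀ i, X i)
    (sold : (∀ c, Ut c) → (∀ i, Nt i) → ∀ i, X i)
    (hsold : ∀ U u i, sold U u i = if i ∈ Xs then xa i else f i (sold U u) U (u i))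
    (Pdo : (∀ i, X i) → ℝ)
    (hPdodef : ∀ v, Pdo v =
      ∑ U : ∀ c, Ut c, ∑ u : ∀ i, Nt i,
        if sold U u = v then (∏ c, ν c (U c)) * ∏ i, μ i (u i) else 0) :
    ∀ v : ∀ i, X i, (∀ i ∈ Xs, v i = xa i) →
      Pdo v = ∏ i ∈ Finset.univ.filter (fun i => i ∉ Xs),
        ((∑ w, if (w i = v i ∧ ∀ j, j < i → w j = v j) then P w else 0) /
         (∑ w, if (∀ j, j < i → w j = v j) then P w else 0)) := by
  intro v hv
  classical
  -- per-node kernels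
  set q : Fin n → (∀ c, Ut c) → ℝ :=
    fun i U => ∑ u : Nt i, if f i v U u = v i then μ i u else 0 with hqdef
  have hq0 : ∀ i U, 0 ≤ q i U := by
    intro i U
    refine Finset.sum_nonneg fun u _ => ?_
    split
    · exact hμ0 i u
    · exact le_refl 0
  have hqdep : ∀ i U W, (∀ c, i ∈ touch c → U c = W c) → q i U = q i W := by
    intro i U W h
    refine Finset.sum_congr rfl fun u _ => ?_
    rw [hdep i v v U W u (fun _ _ => rfl) h]
  have hνtot : (∑ U : ∀ c, Ut c, ∏ c, ν c (U c)) = 1 := by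
    rw [pisum ν]
    simp [hν1]
  have hfact : ∀ (U : ∀ c, Ut c) (T : Finset (Fin n)),
      (∑ u : ∀ i, Nt i, if (∀ j ∈ T, f j v U (u j) = v j) then ∏ i, μ i (u i) else 0)
      = ∏ j ∈ T, q j U := by
    intro U T
    have h1 : ∀ u : ∀ i, Nt i,
        (if (∀ j ∈ T, f j v U (u j) = v j) then ∏ i, μ i (u i) else 0)
        = ∏ i, (if i ∈ T then (if f i v U (u i) = v i then μ i (u i) else 0) else μ i (u i)) := by
      intro u
      by_cases h : ∀ j ∈ T, f j v U (u j) = v j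
      · rw [if_pos h]
        refine Finset.prod_congr rfl fun i _ => ?_
        by_cases hi : i ∈ T
        · rw [if_pos hi, if_pos (h i hi)]
        · rw [if_neg hi]
      · rw [if_neg h]
        push_neg at h
        obtain ⟨j, hjT, hj⟩ := h
        refine (Finset.prod_eq_zero (Finset.mem_univ j) ?_).symm
        rw [if_pos hjT, if_neg hj]
    have h3 : (∑ u : ∀ i, Nt i, ∏ i,
          (if i ∈ T then (if f i v U (u i) = v i then μ i (u i) else 0) else μ i (u i)))
        = ∏ i, ∑ x : Nt i, (if i ∈ T then (if f i v U x = v i then μ i x else 0) else μ i x) :=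
      pisum (fun i x => if i ∈ T then (if f i v U x = v i then μ i x else 0) else μ i x)
    rw [Finset.sum_congr rfl (fun u _ => h1 u), h3]
    have h2 : ∀ i : Fin n,
        (∑ x : Nt i, if i ∈ T then (if f i v U x = v i then μ i x else 0) else μ i x)
        = if i ∈ T then q i U else 1 := by
      intro i
      by_cases hi : i ∈ T
      · simp only [if_pos hi, hqdef]
      · simp only [if_neg hi, hμ1 i]
    rw [Finset.prod_congr rfl (fun i _ => h2 i), Finset.prod_ite_mem, Finset.univ_inter]
  -- characterization of sol on prefixes
  have hsolchar : ∀ (U : ∀ c, Ut c) (u : ∀ i, Nt i) (k : ℕ),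
      (∀ j : Fin n, (j : ℕ) < k → sol U u j = v j) ↔
      (∀ j : Fin n, (j : ℕ) < k → f j v U (u j) = v j) := by
    intro U u k
    constructor
    · intro H j hj
      have hpar : ∀ j' : Fin n, E j' j → v j' = sol U u j' := by
        intro j' hj'
        exact (H j' (lt_trans (hE j' j hj') hj)).symm
      rw [hdep j v (sol U u) U U (u j) hpar (fun _ _ => rfl), ← hsol]
      exact H j hj
    · intro H
      have key : ∀ N : ℕ, ∀ j : Fin n, (j : ℕ) < N → (j : ℕ) < k → sol U u j = v j := by
        intro N
        induction N with
        | zero => intro j h; exact absurd h (Nat.not_lt_zero _)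
        | succ N ih =>
          intro j hjN hjk
          rw [hsol, hdep j (sol U u) v U U (u j)
            (fun j' hj' => ih j' (lt_of_lt_of_le (hE j' j hj') (Nat.lt_succ_iff.mp hjN))
              (lt_trans (hE j' j hj') hjk)) (fun _ _ => rfl)]
          exact H j hjk
      intro j hj
      exact key ((j : ℕ) + 1) j (Nat.lt_succ_self _) hj
  -- characterization of sold
  have hsoldchar : ∀ (U : ∀ c, Ut c) (u : ∀ i, Nt i),
      (sold U u = v) ↔ (∀ j : Fin n, j ∉ Xs → f j v U (u j) = v j) := by
    intro U u
    constructor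
    · intro H j hj
      have h1 := hsold U u j
      rw [if_neg hj] at h1
      calc f j v U (u j) = f j (sold U u) U (u j) :=
            hdep j v (sold U u) U U (u j) (fun j' _ => (congrFun H j').symm) (fun _ _ => rfl)
        _ = sold U u j := h1.symm
        _ = v j := congrFun H j
    · intro H
      have key : ∀ N : ℕ, ∀ j : Fin n, (j : ℕ) < N → sold U u j = v j := by
        intro N
        induction N with
        | zero => intro j h; exact absurd h (Nat.not_lt_zero _)
        | succ N ih =>
          intro j hjN
          rw [hsold]
          by_cases hj : j ∈ Xs
          · rw [if_pos hj]; exact (hv j hj).symm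
          · rw [if_neg hj, hdep j (sold U u) v U U (u j)
              (fun j' hj' => ih j' (lt_of_lt_of_le (hE j' j hj') (Nat.lt_succ_iff.mp hjN)))
              (fun _ _ => rfl)]
            exact H j hj
      funext j
      exact key ((j : ℕ) + 1) j (Nat.lt_succ_self _)
  -- prefix probabilities
  set Psum : ℕ → ℝ := fun k =>
    ∑ w : ∀ i, X i, if (∀ j : Fin n, (j : ℕ) < k → w j = v j) then P w else 0 with hPs
  have step : ∀ k, Psum k = ∑ U : ∀ c, Ut c, ∑ u : ∀ i, Nt i,
      if (∀ j : Fin n, (j : ℕ) < k → sol U u j = v j)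
        then (∏ c, ν c (U c)) * ∏ i, μ i (u i) else 0 := by
    intro k
    simp only [hPs]
    have h1 : ∀ w : ∀ i, X i,
        (if (∀ j : Fin n, (j : ℕ) < k → w j = v j) then P w else 0)
        = ∑ U : ∀ c, Ut c, ∑ u : ∀ i, Nt i,
            if sol U u = w then
              (if (∀ j : Fin n, (j : ℕ) < k → w j = v j)
                then (∏ c, ν c (U c)) * ∏ i, μ i (u i) else 0) else 0 := by
      intro w
      by_cases hC : ∀ j : Fin n, (j : ℕ) < k → w j = v j
      · rw [if_pos hC, hPdef w]
        refine Finset.sum_congr rfl fun U _ => Finset.sum_congr rfl fun u _ => ?_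
        by_cases hs : sol U u = w
        · rw [if_pos hs, if_pos hs, if_pos hC]
        · rw [if_neg hs, if_neg hs]
      · rw [if_neg hC]
        symm
        refine Finset.sum_eq_zero fun U _ => Finset.sum_eq_zero fun u _ => ?_
        by_cases hs : sol U u = w
        · rw [if_pos hs, if_neg hC]
        · rw [if_neg hs]
    rw [Finset.sum_congr rfl (fun w _ => h1 w), Finset.sum_comm]
    refine Finset.sum_congr rfl fun U _ => ?_
    rw [Finset.sum_comm]
    refine Finset.sum_congr rfl fun u _ => ?_
    rw [Finset.sum_ite_eq, if_pos (Finset.mem_univ _)]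
  have hPsum : ∀ k, Psum k = ∑ U : ∀ c, Ut c,
      (∏ c, ν c (U c)) * ∏ j ∈ Finset.univ.filter (fun j : Fin n => (j : ℕ) < k), q j U := by
    intro k
    rw [step k]
    refine Finset.sum_congr rfl fun U _ => ?_
    have h2 : ∀ u : ∀ i, Nt i,
        (if (∀ j : Fin n, (j : ℕ) < k → sol U u j = v j)
          then (∏ c, ν c (U c)) * ∏ i, μ i (u i) else 0)
        = (∏ c, ν c (U c)) *
          (if (∀ j ∈ Finset.univ.filter (fun j : Fin n => (j : ℕ) < k), f j v U (u j) = v j)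
            then ∏ i, μ i (u i) else 0) := by
      intro u
      have hiff : (∀ j : Fin n, (j : ℕ) < k → sol U u j = v j) ↔
          (∀ j ∈ Finset.univ.filter (fun j : Fin n => (j : ℕ) < k), f j v U (u j) = v j) := by
        rw [hsolchar U u k]
        simp [Finset.mem_filter]
      rw [if_congr hiff rfl rfl]
      split_ifs
      · rfl
      · rw [mul_zero]
    rw [Finset.sum_congr rfl (fun u _ => h2 u), ← Finset.mul_sum, hfact U _]
  -- the splice map
  set sp : (∀ c, Ut c) → (∀ c, Ut c) → (∀ c, Ut c) :=
    fun U W c => if touch c ⊆ Xs then U c else W c with hsp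
  have hinv : Function.Involutive (fun p : (∀ c, Ut c) × (∀ c, Ut c) => (sp p.1 p.2, sp p.2 p.1)) := by
    rintro ⟨U, W⟩
    simp only
    refine Prod.ext ?_ ?_ <;> funext c <;> by_cases hc : touch c ⊆ Xs <;>
      simp [hsp, hc]
  have hνsp : ∀ U W : ∀ c, Ut c,
      (∏ c, ν c (sp U W c)) * (∏ c, ν c (sp W U c)) = (∏ c, ν c (U c)) * ∏ c, ν c (W c) := by
    intro U W
    rw [← Finset.prod_mul_distrib, ← Finset.prod_mul_distrib]
    refine Finset.prod_congr rfl fun c _ => ?_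
    by_cases hc : touch c ⊆ Xs <;> simp [hsp, hc, mul_comm]
  -- generic product splitting over the latent variables
  have hprodsplit : ∀ (g h : (∀ c, Ut c) → ℝ),
      (∀ U W, (∀ c, touch c ⊆ Xs → U c = W c) → g U = g W) →
      (∀ U W, (∀ c, ¬ touch c ⊆ Xs → U c = W c) → h U = h W) →
      (∑ U : ∀ c, Ut c, (∏ c, ν c (U c)) * (g U * h U))
        = (∑ U : ∀ c, Ut c, (∏ c, ν c (U c)) * g U)
          * (∑ U : ∀ c, Ut c, (∏ c, ν c (U c)) * h U) := by
    intro g h hg hh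
    have e1 : (∑ U : ∀ c, Ut c, (∏ c, ν c (U c)) * g U)
        * (∑ U : ∀ c, Ut c, (∏ c, ν c (U c)) * h U)
        = ∑ p : (∀ c, Ut c) × (∀ c, Ut c),
            ((∏ c, ν c (p.1 c)) * g p.1) * ((∏ c, ν c (p.2 c)) * h p.2) := by
      rw [Finset.sum_mul_sum]
      exact (Fintype.sum_prod_type
        (f := fun p : (∀ c, Ut c) × (∀ c, Ut c) =>
          ((∏ c, ν c (p.1 c)) * g p.1) * ((∏ c, ν c (p.2 c)) * h p.2))).symm
    rw [e1]
    have e2 : ∑ p : (∀ c, Ut c) × (∀ c, Ut c),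
          ((∏ c, ν c (p.1 c)) * g p.1) * ((∏ c, ν c (p.2 c)) * h p.2)
        = ∑ p : (∀ c, Ut c) × (∀ c, Ut c),
          ((∏ c, ν c ((sp p.1 p.2) c)) * g (sp p.1 p.2))
            * ((∏ c, ν c ((sp p.2 p.1) c)) * h (sp p.2 p.1)) :=
      (Equiv.sum_comp (hinv.toPerm _)
        (fun p : (∀ c, Ut c) × (∀ c, Ut c) =>
          ((∏ c, ν c (p.1 c)) * g p.1) * ((∏ c, ν c (p.2 c)) * h p.2))).symm
    rw [e2]
    have e3 : ∀ p : (∀ c, Ut c) × (∀ c, Ut c),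
        ((∏ c, ν c ((sp p.1 p.2) c)) * g (sp p.1 p.2))
          * ((∏ c, ν c ((sp p.2 p.1) c)) * h (sp p.2 p.1))
        = ((∏ c, ν c (p.1 c)) * (g p.1 * h p.1)) * (∏ c, ν c (p.2 c)) := by
      rintro ⟨U, W⟩
      simp only
      have hgU : g (sp U W) = g U := hg _ _ (fun c hc => by simp only [hsp]; rw [if_pos hc])
      have hhU : h (sp W U) = h U := hh _ _ (fun c hc => by simp only [hsp]; rw [if_neg hc])
      rw [hgU, hhU]
      calc ((∏ c, ν c (sp U W c)) * g U) * ((∏ c, ν c (sp W U c)) * h U)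
          = ((∏ c, ν c (sp U W c)) * (∏ c, ν c (sp W U c))) * (g U * h U) := by ring
        _ = ((∏ c, ν c (U c)) * ∏ c, ν c (W c)) * (g U * h U) := by rw [hνsp]
        _ = ((∏ c, ν c (U c)) * (g U * h U)) * (∏ c, ν c (W c)) := by ring
    rw [Finset.sum_congr rfl (fun p _ => e3 p)]
    have e4 : ∑ p : (∀ c, Ut c) × (∀ c, Ut c),
          ((∏ c, ν c (p.1 c)) * (g p.1 * h p.1)) * (∏ c, ν c (p.2 c))
        = ∑ U : ∀ c, Ut c, ∑ W : ∀ c, Ut c,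
          ((∏ c, ν c (U c)) * (g U * h U)) * (∏ c, ν c (W c)) := Fintype.sum_prod_type _
    rw [e4]
    refine Finset.sum_congr rfl fun U _ => ?_
    rw [← Finset.mul_sum, hνtot, mul_one]
  -- the two factors
  set A : ℕ → ℝ := fun k => ∑ U : ∀ c, Ut c, (∏ c, ν c (U c)) *
    ∏ j ∈ Finset.univ.filter (fun j : Fin n => (j : ℕ) < k ∧ j ∈ Xs), q j U with hA
  set B : ℕ → ℝ := fun k => ∑ U : ∀ c, Ut c, (∏ c, ν c (U c)) *
    ∏ j ∈ Finset.univ.filter (fun j : Fin n => (j : ℕ) < k ∧ j ∉ Xs), q j U with hB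
  have hgdep : ∀ (k : ℕ) (U W : ∀ c, Ut c), (∀ c, touch c ⊆ Xs → U c = W c) →
      (∏ j ∈ Finset.univ.filter (fun j : Fin n => (j : ℕ) < k ∧ j ∈ Xs), q j U)
      = ∏ j ∈ Finset.univ.filter (fun j : Fin n => (j : ℕ) < k ∧ j ∈ Xs), q j W := by
    intro k U W h
    refine Finset.prod_congr rfl fun j hj => ?_
    simp only [Finset.mem_filter] at hj
    refine hqdep j U W fun c hc => ?_
    rcases hcross c with h1 | h1
    · exact h c h1
    · exact absurd hj.2.2 (h1 j hc)
  have hhdep : ∀ (k : ℕ) (U W : ∀ c, Ut c), (∀ c, ¬ touch c ⊆ Xs → U c = W c) →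
      (∏ j ∈ Finset.univ.filter (fun j : Fin n => (j : ℕ) < k ∧ j ∉ Xs), q j U)
      = ∏ j ∈ Finset.univ.filter (fun j : Fin n => (j : ℕ) < k ∧ j ∉ Xs), q j W := by
    intro k U W h
    refine Finset.prod_congr rfl fun j hj => ?_
    simp only [Finset.mem_filter] at hj
    refine hqdep j U W fun c hc => ?_
    refine h c fun hsub => ?_
    exact hj.2.2 (hsub hc)
  have hsplit : ∀ k, Psum k = A k * B k := by
    intro k
    rw [hPsum k]
    have hT : ∀ U : ∀ c, Ut c,
        (∏ j ∈ Finset.univ.filter (fun j : Fin n => (j : ℕ) < k), q j U)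
        = (∏ j ∈ Finset.univ.filter (fun j : Fin n => (j : ℕ) < k ∧ j ∈ Xs), q j U)
          * ∏ j ∈ Finset.univ.filter (fun j : Fin n => (j : ℕ) < k ∧ j ∉ Xs), q j U := by
      intro U
      rw [← Finset.prod_filter_mul_prod_filter_not
        (Finset.univ.filter (fun j : Fin n => (j : ℕ) < k)) (fun j => j ∈ Xs),
        Finset.filter_filter, Finset.filter_filter]
    rw [Finset.sum_congr rfl fun U _ => by rw [hT U]]
    exact hprodsplit _ _ (hgdep k) (hhdep k)
  -- positivity
  have hPpos : ∀ k, 0 < Psum k := by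
    intro k
    refine Finset.sum_pos' (fun w _ => ?_) ⟨v, Finset.mem_univ v, ?_⟩
    · split
      · exact (hpos w).le
      · exact le_refl 0
    · rw [if_pos (fun j _ => rfl)]
      exact hpos v
  have hA0 : ∀ k, 0 ≤ A k := by
    intro k
    refine Finset.sum_nonneg fun U _ => mul_nonneg
      (Finset.prod_nonneg fun c _ => hν0 c _) (Finset.prod_nonneg fun j _ => hq0 j U)
  have hB0 : ∀ k, 0 ≤ B k := by
    intro k
    refine Finset.sum_nonneg fun U _ => mul_nonneg
      (Finset.prod_nonneg fun c _ => hν0 c _) (Finset.prod_nonneg fun j _ => hq0 j U)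
  have hApos : ∀ k, 0 < A k := by
    intro k
    have h := hPpos k
    rw [hsplit k] at h
    rcases mul_pos_iff.mp h with ⟨h1, _⟩ | ⟨h1, h2⟩
    · exact h1
    · linarith [hB0 k]
  have hBpos : ∀ k, 0 < B k := by
    intro k
    have h := hPpos k
    rw [hsplit k] at h
    rcases mul_pos_iff.mp h with ⟨_, h2⟩ | ⟨h1, h2⟩
    · exact h2
    · linarith [hA0 k]
  -- stability
  have hAstab : ∀ i : Fin n, i ∉ Xs → A ((i : ℕ) + 1) = A (i : ℕ) := by
    intro i hi
    simp only [hA]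
    refine Finset.sum_congr rfl fun U _ => ?_
    congr 1
    refine Finset.prod_congr ?_ fun _ _ => rfl
    ext j
    simp only [Finset.mem_filter, Finset.mem_univ, true_and]
    constructor
    · rintro ⟨h1, h2⟩
      refine ⟨?_, h2⟩
      rcases Nat.lt_succ_iff_lt_or_eq.mp h1 with h | h
      · exact h
      · exact absurd (Fin.ext h ▸ h2) hi
    · rintro ⟨h1, h2⟩
      exact ⟨Nat.lt_succ_of_lt h1, h2⟩
  have hBstab : ∀ i : Fin n, i ∈ Xs → B ((i : ℕ) + 1) = B (i : ℕ) := by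
    intro i hi
    simp only [hB]
    refine Finset.sum_congr rfl fun U _ => ?_
    congr 1
    refine Finset.prod_congr ?_ fun _ _ => rfl
    ext j
    simp only [Finset.mem_filter, Finset.mem_univ, true_and]
    constructor
    · rintro ⟨h1, h2⟩
      refine ⟨?_, h2⟩
      rcases Nat.lt_succ_iff_lt_or_eq.mp h1 with h | h
      · exact h
      · exact absurd (Fin.ext h ▸ hi) h2
    · rintro ⟨h1, h2⟩
      exact ⟨Nat.lt_succ_of_lt h1, h2⟩
  -- Pdo v = B n
  have hPdoB : Pdo v = B n := by
    rw [hPdodef v]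
    have h1 : ∀ (U : ∀ c, Ut c) (u : ∀ i, Nt i),
        (if sold U u = v then (∏ c, ν c (U c)) * ∏ i, μ i (u i) else 0)
        = (∏ c, ν c (U c)) *
          (if (∀ j ∈ Finset.univ.filter (fun j : Fin n => (j : ℕ) < n ∧ j ∉ Xs),
              f j v U (u j) = v j) then ∏ i, μ i (u i) else 0) := by
      intro U u
      have hiff : (sold U u = v) ↔
          (∀ j ∈ Finset.univ.filter (fun j : Fin n => (j : ℕ) < n ∧ j ∉ Xs),
            f j v U (u j) = v j) := by
        rw [hsoldchar U u]
        constructor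
        · intro H j hj
          simp only [Finset.mem_filter] at hj
          exact H j hj.2.2
        · intro H j hj
          refine H j ?_
          simp only [Finset.mem_filter, Finset.mem_univ, true_and]
          exact ⟨j.isLt, hj⟩
      rw [if_congr hiff rfl rfl]
      split_ifs
      · rfl
      · rw [mul_zero]
    rw [Finset.sum_congr rfl fun U _ => by
      rw [Finset.sum_congr rfl fun u _ => h1 U u, ← Finset.mul_sum, hfact U _]]
  -- identification of numerators and denominators
  have hden : ∀ i : Fin n,
      (∑ w : ∀ i, X i, if (∀ j, j < i → w j = v j) then P w else 0) = Psum (i : ℕ) := by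
    intro i
    refine Finset.sum_congr rfl fun w _ => ?_
    refine if_congr ?_ rfl rfl
    constructor
    · intro H j hj
      exact H j (Fin.lt_def.mpr hj)
    · intro H j hj
      exact H j (Fin.lt_def.mp hj)
  have hnum : ∀ i : Fin n,
      (∑ w : ∀ i, X i, if (w i = v i ∧ ∀ j, j < i → w j = v j) then P w else 0)
      = Psum ((i : ℕ) + 1) := by
    intro i
    refine Finset.sum_congr rfl fun w _ => ?_
    refine if_congr ?_ rfl rfl
    constructor
    · rintro ⟨h1, h2⟩ j hj
      rcases Nat.lt_succ_iff_lt_or_eq.mp hj with h | h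
      · exact h2 j (Fin.lt_def.mpr h)
      · rw [Fin.ext h]
        exact h1
    · intro H
      exact ⟨H i (Nat.lt_succ_self _),
        fun j hj => H j (Nat.lt_succ_of_lt (Fin.lt_def.mp hj))⟩
  -- telescoping
  have hBzero : B 0 = 1 := by
    simp only [hB]
    have he : Finset.univ.filter (fun j : Fin n => (j : ℕ) < 0 ∧ j ∉ Xs) = ∅ := by
      ext j; simp
    rw [he]
    simp only [Finset.prod_empty, mul_one]
    exact hνtot
  have htel : ∀ N : ℕ, (∏ k ∈ Finset.range N, B (k + 1) / B k) = B N / B 0 := by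
    intro N
    induction N with
    | zero => rw [Finset.range_zero, Finset.prod_empty, div_self (ne_of_gt (hBpos 0))]
    | succ N ih =>
      rw [Finset.prod_range_succ, ih, div_mul_div_comm, mul_comm (B 0) (B N),
        mul_div_mul_left _ _ (ne_of_gt (hBpos N))]
  -- assembly
  calc Pdo v = B n := hPdoB
    _ = B n / B 0 := by rw [hBzero, div_one]
    _ = ∏ k ∈ Finset.range n, B (k + 1) / B k := (htel n).symm
    _ = ∏ i : Fin n, B ((i : ℕ) + 1) / B (i : ℕ) :=
        (Fin.prod_univ_eq_prod_range (fun k => B (k + 1) / B k) n).symm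
    _ = ∏ i ∈ Finset.univ.filter (fun i : Fin n => i ∉ Xs), B ((i : ℕ) + 1) / B (i : ℕ) := by
        refine (Finset.prod_subset (Finset.filter_subset _ _) fun i _ hi => ?_).symm
        simp only [Finset.mem_filter, Finset.mem_univ, true_and, not_not] at hi
        rw [hBstab i hi, div_self (ne_of_gt (hBpos (i : ℕ)))]
    _ = ∏ i ∈ Finset.univ.filter (fun i : Fin n => i ∉ Xs),
        ((∑ w : ∀ i, X i, if (w i = v i ∧ ∀ j, j < i → w j = v j) then P w else 0) /
         (∑ w : ∀ i, X i, if (∀ j, j < i → w j = v j) then P w else 0)) := by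
        refine Finset.prod_congr rfl fun i hi => ?_
        simp only [Finset.mem_filter, Finset.mem_univ, true_and] at hi
        rw [hnum i, hden i, hsplit ((i : ℕ) + 1), hsplit (i : ℕ), hAstab i hi,
          mul_div_mul_left _ _ (ne_of_gt (hApos (i : ℕ)))]
end

section
/- Intervention on a set with no bidirected edges to the rest preserves single-variable conditionals of the remaining c-component: in a semi-Markovian SCM whose ADMG has c-component partition {S', X_Z} with X_Z sharing no bidirected edge with S', the post-intervention distribution P(s' | do(x_z)) equals ∏_{V_i ∈ S'} P(v_i | v_π^{(i-1)} ∩ S', x_z restricted to predecessors), i.e., the distribution obtained by the product of observational conditionals of S'-variables given their topological predecessors with X_Z fixed at x_z. -/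
open Finset

lemma pi_sum_one {ι : Type*} [Fintype ι] [DecidableEq ι] {T : ι → Type*} [∀ i, Fintype (T i)]
    (φ : ∀ i, T i → ℝ) (hφ : ∀ i, ∑ t, φ i t = 1) :
    ∑ x : ∀ i, T i, ∏ i, φ i (x i) = 1 := by
  rw [← Fintype.piFinset_univ, ← Finset.prod_univ_sum]
  simp [hφ]

lemma split_indep {ι : Type*} [Fintype ι] [DecidableEq ι] {T : ι → Type*} [∀ i, Fintype (T i)]
    (φ : ∀ i, T i → ℝ) (hφ : ∀ i, ∑ t, φ i t = 1)
    (s : Finset ι) (F G : (∀ i, T i) → ℝ)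
    (hF : ∀ x y, (∀ i ∈ s, x i = y i) → F x = F y)
    (hG : ∀ x y, (∀ i, i ∉ s → x i = y i) → G x = G y) :
    (∑ x, (∏ i, φ i (x i)) * F x) * (∑ x, (∏ i, φ i (x i)) * G x)
      = ∑ x, (∏ i, φ i (x i)) * (F x * G x) := by
  classical
  set W : (∀ i, T i) → ℝ := fun x => ∏ i, φ i (x i) with hW
  set p : (∀ i, T i) → (∀ i, T i) → (∀ i, T i) :=
    fun x y i => if i ∈ s then x i else y i with hp
  have hinv : Function.Involutive
      (fun z : (∀ i, T i) × (∀ i, T i) => (p z.1 z.2, p z.2 z.1)) := by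
    intro z
    refine Prod.ext ?_ ?_ <;> funext i <;> by_cases h : i ∈ s <;> simp [hp, h]
  have key : ∀ x y : ∀ i, T i,
      (W x * F x) * (W y * G y)
        = (W (p x y) * (F (p x y) * G (p x y))) * W (p y x) := by
    intro x y
    have hFx : F x = F (p x y) := hF x (p x y) (by intro i hi; simp [hp, hi])
    have hGy : G y = G (p x y) := hG y (p x y) (by intro i hi; simp [hp, hi])
    have hWW : W x * W y = W (p x y) * W (p y x) := by
      simp only [hW, ← Finset.prod_mul_distrib]
      refine Finset.prod_congr rfl fun i _ => ?_
      by_cases h : i ∈ s <;> simp [hp, h, mul_comm]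
    calc (W x * F x) * (W y * G y) = (W x * W y) * (F x * G y) := by ring
      _ = (W (p x y) * W (p y x)) * (F (p x y) * G (p x y)) := by rw [hWW, hFx, hGy]
      _ = (W (p x y) * (F (p x y) * G (p x y))) * W (p y x) := by ring
  calc (∑ x, W x * F x) * (∑ x, W x * G x)
      = ∑ x, ∑ y, (W x * F x) * (W y * G y) := Finset.sum_mul_sum _ _ _ _
    _ = ∑ z : (∀ i, T i) × (∀ i, T i),
          (fun w : (∀ i, T i) × (∀ i, T i) => (W w.1 * (F w.1 * G w.1)) * W w.2)
            ((Function.Involutive.toPerm _ hinv) z) := by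
        rw [Fintype.sum_prod_type]
        refine Finset.sum_congr rfl fun x _ => Finset.sum_congr rfl fun y _ => ?_
        simpa using key x y
    _ = ∑ z : (∀ i, T i) × (∀ i, T i), (W z.1 * (F z.1 * G z.1)) * W z.2 :=
        Equiv.sum_comp (Function.Involutive.toPerm _ hinv)
          (fun w : (∀ i, T i) × (∀ i, T i) => (W w.1 * (F w.1 * G w.1)) * W w.2)
    _ = ∑ x, ∑ y, (W x * (F x * G x)) * W y := Fintype.sum_prod_type _
    _ = (∑ x, W x * (F x * G x)) * (∑ y, W y) := (Finset.sum_mul_sum _ _ _ _).symm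
    _ = ∑ x, W x * (F x * G x) := by rw [pi_sum_one φ hφ]; ring

lemma tele_prod (g : ℕ → ℝ) (hg : ∀ k, g k ≠ 0) (n : ℕ) :
    ∏ k ∈ Finset.range n, g (k+1) / g k = g n / g 0 := by
  induction n with
  | zero => simp [div_self (hg 0)]
  | succ n ih =>
      rw [Finset.prod_range_succ, ih, div_mul_div_comm, mul_comm (g n),
        mul_div_mul_right _ _ (hg n)]

/-- ID/ID-GEN Step 7 dataset-update correctness: in a semi-Markovian SCM whose ADMG has
c-component partition `{S', X_Z}` (each bidirected-connected, and `X_Z = Xs` shares no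
bidirected edge with `S' = V \ Xs`), the post-intervention distribution satisfies
`P(s' | do(x_z)) = ∏_{V_i ∈ S'} P(v_i | v_π^{(i-1)})`, the product of the observational
conditionals of `S'`-variables given their topological predecessors with the
predecessors in `X_Z` fixed at `x_z`. -/
theorem stmt_19 (n m : ℕ) (X : Fin n → Type) [∀ i, Fintype (X i)] [∀ i, DecidableEq (X i)]
    (Nt : Fin n → Type) [∀ i, Fintype (Nt i)]
    (Ut : Fin m → Type) [∀ c, Fintype (Ut c)]
    (μ : ∀ i, Nt i → ℝ) (ν : ∀ c, Ut c → ℝ)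
    (hμ0 : ∀ i u, 0 ≤ μ i u) (hμ1 : ∀ i, ∑ u, μ i u = 1)
    (hν0 : ∀ c u, 0 ≤ ν c u) (hν1 : ∀ c, ∑ u, ν c u = 1)
    (E : Fin n → Fin n → Prop) [DecidableRel E]
    (hE : ∀ i j, E i j → i < j)
    (touch : Fin m → Finset (Fin n)) (htouch : ∀ c, (touch c).card = 2)
    (f : ∀ i, (∀ j, X j) → (∀ c, Ut c) → Nt i → X i)
    (hdep : ∀ i v w U W u, (∀ j, E j i → v j = w j) →
      (∀ c, i ∈ touch c → U c = W c) → f i v U u = f i w W u)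
    (Xs : Finset (Fin n))
    -- `X_Z = Xs` shares no bidirected edge with `S' = V \ Xs`
    (hcross : ∀ c, (touch c ⊆ Xs) ∨ (∀ i ∈ touch c, i ∉ Xs))
    -- `S'` is a c-component
    (hconnS : ∀ i j, i ∉ Xs → j ∉ Xs →
      Relation.ReflTransGen (fun a b => ∃ c, a ∈ touch c ∧ b ∈ touch c ∧ a ≠ b) i j)
    -- `X_Z` is a c-component
    (hconnX : ∀ i j, i ∈ Xs → j ∈ Xs →
      Relation.ReflTransGen (fun a b => ∃ c, a ∈ touch c ∧ b ∈ touch c ∧ a ≠ b) i j)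
    (sol : (∀ c, Ut c) → (∀ i, Nt i) → ∀ i, X i)
    (hsol : ∀ U u i, sol U u i = f i (sol U u) U (u i))
    (P : (∀ i, X i) → ℝ)
    (hPdef : ∀ v, P v =
      ∑ U : ∀ c, Ut c, ∑ u : ∀ i, Nt i,
        if sol U u = v then (∏ c, ν c (U c)) * ∏ i, μ i (u i) else 0)
    (hpos : ∀ v, 0 < P v)
    (xz : ∀ i, X i)
    (sold : (∀ c, Ut c) → (∀ i, Nt i) → ∀ i, X i)
    (hsold : ∀ U u i, sold U u i = if i ∈ Xs then xz i else f i (sold U u) U (u i))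
    (Pdo : (∀ i, X i) → ℝ)
    (hPdodef : ∀ v, Pdo v =
      ∑ U : ∀ c, Ut c, ∑ u : ∀ i, Nt i,
        if sold U u = v then (∏ c, ν c (U c)) * ∏ i, μ i (u i) else 0) :
    ∀ v : ∀ i, X i, (∀ i ∈ Xs, v i = xz i) →
      Pdo v = ∏ i ∈ Finset.univ.filter (fun i => i ∉ Xs),
        ((∑ w, if (w i = v i ∧ ∀ j, j < i → w j = v j) then P w else 0) /
         (∑ w, if (∀ j, j < i → w j = v j) then P w else 0)) := by
  classical
  intro v hv
  set A : (∀ c, Ut c) → ℝ := fun U => ∏ c, ν c (U c) with hA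
  set B : (∀ i, Nt i) → ℝ := fun u => ∏ i, μ i (u i) with hB
  set QS : ℕ → ℝ := fun k => ∑ U : ∀ c, Ut c, ∑ u : ∀ i, Nt i,
    if (∀ i : Fin n, (i : ℕ) < k → i ∉ Xs → f i v U (u i) = v i)
    then A U * B u else 0 with hQS
  set QX : ℕ → ℝ := fun k => ∑ U : ∀ c, Ut c, ∑ u : ∀ i, Nt i,
    if (∀ i : Fin n, (i : ℕ) < k → i ∈ Xs → f i v U (u i) = v i)
    then A U * B u else 0 with hQX
  set M : ℕ → ℝ := fun k => ∑ w : ∀ i, X i,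
    if (∀ j : Fin n, (j : ℕ) < k → w j = v j) then P w else 0 with hM
  -- total weight is one
  have hW1 : (∑ U : ∀ c, Ut c, ∑ u : ∀ i, Nt i, A U * B u) = 1 := by
    simp only [hA, hB]
    rw [← Finset.sum_mul_sum, pi_sum_one ν hν1, pi_sum_one μ hμ1, mul_one]
  -- characterization of `sol` prefixes
  have hsol_iff : ∀ (k : ℕ) (U : ∀ c, Ut c) (u : ∀ i, Nt i),
      (∀ j : Fin n, (j : ℕ) < k → sol U u j = v j)
        ↔ (∀ i : Fin n, (i : ℕ) < k → f i v U (u i) = v i) := by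
    intro k U u
    constructor
    · intro h i hik
      have hf : f i (sol U u) U (u i) = f i v U (u i) := by
        refine hdep i (sol U u) v U U (u i) (fun j hj => ?_) (fun c _ => rfl)
        have hji : (j : ℕ) < (i : ℕ) := Fin.lt_def.mp (hE j i hj)
        exact h j (by omega)
      rw [← hf, ← hsol U u i]
      exact h i hik
    · intro h
      have main : ∀ N : ℕ, ∀ j : Fin n, (j : ℕ) < N → (j : ℕ) < k → sol U u j = v j := by
        intro N
        induction N with
        | zero => intro j hj _; omega
        | succ N ih =>
            intro j hjN hjk
            rw [hsol U u j, hdep j (sol U u) v U U (u j)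
              (fun l hl => ih l (by have := Fin.lt_def.mp (hE l j hl); omega)
                (by have := Fin.lt_def.mp (hE l j hl); omega))
              (fun c _ => rfl)]
            exact h j hjk
      intro j hjk
      exact main ((j : ℕ) + 1) j (Nat.lt_succ_self _) hjk
  -- marginal as a mechanism sum
  have hM_repr : ∀ k : ℕ, M k = ∑ U : ∀ c, Ut c, ∑ u : ∀ i, Nt i,
      if (∀ i : Fin n, (i : ℕ) < k → f i v U (u i) = v i) then A U * B u else 0 := by
    intro k
    simp only [hM]
    have step1 : ∀ w : ∀ i, X i,
        (if (∀ j : Fin n, (j : ℕ) < k → w j = v j) then P w else 0)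
          = ∑ U : ∀ c, Ut c, ∑ u : ∀ i, Nt i,
              if (∀ j : Fin n, (j : ℕ) < k → w j = v j) then
                (if sol U u = w then A U * B u else 0) else 0 := by
      intro w
      by_cases h : ∀ j : Fin n, (j : ℕ) < k → w j = v j
      · simp only [if_pos h]
        rw [hPdef w]
      · simp only [if_neg h]
        simp
    calc (∑ w : ∀ i, X i, if (∀ j : Fin n, (j : ℕ) < k → w j = v j) then P w else 0)
        = ∑ w : ∀ i, X i, ∑ U : ∀ c, Ut c, ∑ u : ∀ i, Nt i,
            if (∀ j : Fin n, (j : ℕ) < k → w j = v j) then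
              (if sol U u = w then A U * B u else 0) else 0 :=
          Finset.sum_congr rfl fun w _ => step1 w
      _ = ∑ U : ∀ c, Ut c, ∑ u : ∀ i, Nt i, ∑ w : ∀ i, X i,
            if (∀ j : Fin n, (j : ℕ) < k → w j = v j) then
              (if sol U u = w then A U * B u else 0) else 0 := by
          rw [Finset.sum_comm]
          exact Finset.sum_congr rfl fun U _ => Finset.sum_comm
      _ = ∑ U : ∀ c, Ut c, ∑ u : ∀ i, Nt i,
            if (∀ i : Fin n, (i : ℕ) < k → f i v U (u i) = v i) then A U * B u else 0 := by
          refine Finset.sum_congr rfl fun U _ => Finset.sum_congr rfl fun u _ => ?_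
          rw [Finset.sum_eq_single (sol U u)]
          · by_cases h : ∀ j : Fin n, (j : ℕ) < k → sol U u j = v j
            · rw [if_pos h, if_pos rfl, if_pos ((hsol_iff k U u).mp h)]
            · rw [if_neg h, if_neg (fun hc => h ((hsol_iff k U u).mpr hc))]
          · intro w _ hw
            by_cases h : ∀ j : Fin n, (j : ℕ) < k → w j = v j
            · rw [if_pos h, if_neg (fun he => hw he.symm)]
            · rw [if_neg h]
          · intro h
            exact absurd (Finset.mem_univ _) h
  -- condition splitting
  have hCsplit : ∀ (k : ℕ) (U : ∀ c, Ut c) (u : ∀ i, Nt i),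
      (∀ i : Fin n, (i : ℕ) < k → f i v U (u i) = v i)
        ↔ ((∀ i : Fin n, (i : ℕ) < k → i ∉ Xs → f i v U (u i) = v i)
           ∧ (∀ i : Fin n, (i : ℕ) < k → i ∈ Xs → f i v U (u i) = v i)) := by
    intro k U u
    constructor
    · intro h
      exact ⟨fun i h1 _ => h i h1, fun i h1 _ => h i h1⟩
    · rintro ⟨h1, h2⟩ i hik
      by_cases hi : i ∈ Xs
      · exact h2 i hik hi
      · exact h1 i hik hi
  -- the factorization M k = QS k * QX k
  have hMQ : ∀ k : ℕ, M k = QS k * QX k := by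
    intro k
    have hdepS : ∀ (x y : ∀ c, Ut c),
        (∀ c ∈ Finset.univ.filter (fun c => ∀ i ∈ touch c, i ∉ Xs), x c = y c) →
        ∀ (i : Fin n), i ∉ Xs → ∀ t : Nt i, f i v x t = f i v y t := by
      intro x y hxy i hi t
      refine hdep i v v x y t (fun j _ => rfl) (fun c hc => hxy c ?_)
      simp only [Finset.mem_filter, Finset.mem_univ, true_and]
      rcases hcross c with h | h
      · exact absurd (h hc) hi
      · exact h
    have hdepX : ∀ (x y : ∀ c, Ut c),
        (∀ c, c ∉ Finset.univ.filter (fun c => ∀ i ∈ touch c, i ∉ Xs) → x c = y c) →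
        ∀ (i : Fin n), i ∈ Xs → ∀ t : Nt i, f i v x t = f i v y t := by
      intro x y hxy i hi t
      refine hdep i v v x y t (fun j _ => rfl) (fun c hc => hxy c ?_)
      simp only [Finset.mem_filter, Finset.mem_univ, true_and]
      intro hall
      exact hall i hc hi
    have inner : ∀ U : ∀ c, Ut c,
        (∑ u : ∀ i, Nt i, (∏ i, μ i (u i)) *
          ((if (∀ i : Fin n, (i : ℕ) < k → i ∉ Xs → f i v U (u i) = v i) then (1:ℝ) else 0) *
           (if (∀ i : Fin n, (i : ℕ) < k → i ∈ Xs → f i v U (u i) = v i) then (1:ℝ) else 0)))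
        = (∑ u : ∀ i, Nt i, (∏ i, μ i (u i)) *
            (if (∀ i : Fin n, (i : ℕ) < k → i ∉ Xs → f i v U (u i) = v i) then (1:ℝ) else 0))
          * (∑ u : ∀ i, Nt i, (∏ i, μ i (u i)) *
            (if (∀ i : Fin n, (i : ℕ) < k → i ∈ Xs → f i v U (u i) = v i) then (1:ℝ) else 0)) := by
      intro U
      refine (split_indep μ hμ1 (Finset.univ.filter (fun i => i ∉ Xs)) _ _ ?_ ?_).symm
      · intro x y hxy
        refine if_congr ?_ rfl rfl
        constructor <;> intro h i h1 h2
        · rw [← hxy i (by simp [h2])]; exact h i h1 h2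
        · rw [hxy i (by simp [h2])]; exact h i h1 h2
      · intro x y hxy
        refine if_congr ?_ rfl rfl
        constructor <;> intro h i h1 h2
        · rw [← hxy i (by simp [h2])]; exact h i h1 h2
        · rw [hxy i (by simp [h2])]; exact h i h1 h2
    have outer :
        (∑ U : ∀ c, Ut c, (∏ c, ν c (U c)) *
          ((∑ u : ∀ i, Nt i, (∏ i, μ i (u i)) *
            (if (∀ i : Fin n, (i : ℕ) < k → i ∉ Xs → f i v U (u i) = v i) then (1:ℝ) else 0)) *
           (∑ u : ∀ i, Nt i, (∏ i, μ i (u i)) *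
            (if (∀ i : Fin n, (i : ℕ) < k → i ∈ Xs → f i v U (u i) = v i) then (1:ℝ) else 0))))
        = (∑ U : ∀ c, Ut c, (∏ c, ν c (U c)) *
            (∑ u : ∀ i, Nt i, (∏ i, μ i (u i)) *
              (if (∀ i : Fin n, (i : ℕ) < k → i ∉ Xs → f i v U (u i) = v i) then (1:ℝ) else 0)))
          * (∑ U : ∀ c, Ut c, (∏ c, ν c (U c)) *
            (∑ u : ∀ i, Nt i, (∏ i, μ i (u i)) *
              (if (∀ i : Fin n, (i : ℕ) < k → i ∈ Xs → f i v U (u i) = v i) then (1:ℝ) else 0))) := by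
      refine (split_indep ν hν1 (Finset.univ.filter (fun c => ∀ i ∈ touch c, i ∉ Xs)) _ _ ?_ ?_).symm
      · intro x y hxy
        refine Finset.sum_congr rfl fun u _ => ?_
        congr 1
        refine if_congr ?_ rfl rfl
        constructor <;> intro h i h1 h2
        · rw [← hdepS x y hxy i h2 (u i)]; exact h i h1 h2
        · rw [hdepS x y hxy i h2 (u i)]; exact h i h1 h2
      · intro x y hxy
        refine Finset.sum_congr rfl fun u _ => ?_
        congr 1
        refine if_congr ?_ rfl rfl
        constructor <;> intro h i h1 h2
        · rw [← hdepX x y hxy i h2 (u i)]; exact h i h1 h2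
        · rw [hdepX x y hxy i h2 (u i)]; exact h i h1 h2
    have hQSeq : QS k = ∑ U : ∀ c, Ut c, (∏ c, ν c (U c)) *
        (∑ u : ∀ i, Nt i, (∏ i, μ i (u i)) *
          (if (∀ i : Fin n, (i : ℕ) < k → i ∉ Xs → f i v U (u i) = v i) then (1:ℝ) else 0)) := by
      simp only [hQS]
      refine Finset.sum_congr rfl fun U _ => ?_
      rw [Finset.mul_sum]
      refine Finset.sum_congr rfl fun u _ => ?_
      by_cases h : ∀ i : Fin n, (i : ℕ) < k → i ∉ Xs → f i v U (u i) = v i <;>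
        simp [hA, hB, h]
    have hQXeq : QX k = ∑ U : ∀ c, Ut c, (∏ c, ν c (U c)) *
        (∑ u : ∀ i, Nt i, (∏ i, μ i (u i)) *
          (if (∀ i : Fin n, (i : ℕ) < k → i ∈ Xs → f i v U (u i) = v i) then (1:ℝ) else 0)) := by
      simp only [hQX]
      refine Finset.sum_congr rfl fun U _ => ?_
      rw [Finset.mul_sum]
      refine Finset.sum_congr rfl fun u _ => ?_
      by_cases h : ∀ i : Fin n, (i : ℕ) < k → i ∈ Xs → f i v U (u i) = v i <;>
        simp [hA, hB, h]
    calc M k = ∑ U : ∀ c, Ut c, ∑ u : ∀ i, Nt i,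
          if (∀ i : Fin n, (i : ℕ) < k → f i v U (u i) = v i) then A U * B u else 0 :=
        hM_repr k
      _ = ∑ U : ∀ c, Ut c, (∏ c, ν c (U c)) *
            (∑ u : ∀ i, Nt i, (∏ i, μ i (u i)) *
              ((if (∀ i : Fin n, (i : ℕ) < k → i ∉ Xs → f i v U (u i) = v i) then (1:ℝ) else 0) *
               (if (∀ i : Fin n, (i : ℕ) < k → i ∈ Xs → f i v U (u i) = v i) then (1:ℝ) else 0))) := by
          refine Finset.sum_congr rfl fun U _ => ?_
          rw [Finset.mul_sum]
          refine Finset.sum_congr rfl fun u _ => ?_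
          rw [if_congr (hCsplit k U u) rfl rfl]
          by_cases h1 : ∀ i : Fin n, (i : ℕ) < k → i ∉ Xs → f i v U (u i) = v i
          · by_cases h2 : ∀ i : Fin n, (i : ℕ) < k → i ∈ Xs → f i v U (u i) = v i
            · rw [if_pos ⟨h1, h2⟩, if_pos h1, if_pos h2]
              simp [hA, hB]
            · rw [if_neg (fun hc => h2 hc.2), if_neg h2]
              simp
          · rw [if_neg (fun hc => h1 hc.1), if_neg h1]
            simp
      _ = ∑ U : ∀ c, Ut c, (∏ c, ν c (U c)) *
            ((∑ u : ∀ i, Nt i, (∏ i, μ i (u i)) *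
              (if (∀ i : Fin n, (i : ℕ) < k → i ∉ Xs → f i v U (u i) = v i) then (1:ℝ) else 0)) *
             (∑ u : ∀ i, Nt i, (∏ i, μ i (u i)) *
              (if (∀ i : Fin n, (i : ℕ) < k → i ∈ Xs → f i v U (u i) = v i) then (1:ℝ) else 0))) :=
          Finset.sum_congr rfl fun U _ => by rw [inner U]
      _ = QS k * QX k := by rw [outer, hQSeq, hQXeq]
  have hQS0 : QS 0 = 1 := by
    simp only [hQS]
    rw [← hW1]
    refine Finset.sum_congr rfl fun U _ => Finset.sum_congr rfl fun u _ => ?_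
    rw [if_pos]
    intro i hi
    omega
  have hPdoQS : Pdo v = QS n := by
    have hsold_iff : ∀ (U : ∀ c, Ut c) (u : ∀ i, Nt i),
        sold U u = v ↔ (∀ i : Fin n, i ∉ Xs → f i v U (u i) = v i) := by
      intro U u
      constructor
      · intro h i hi
        have h2 : sold U u i = f i (sold U u) U (u i) := by rw [hsold U u i, if_neg hi]
        rw [h] at h2
        exact h2.symm
      · intro h
        funext i
        have main : ∀ N : ℕ, ∀ j : Fin n, (j : ℕ) < N → sold U u j = v j := by
          intro N
          induction N with
          | zero => intro j hj; omega
          | succ N ih =>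
              intro j hjN
              by_cases hj : j ∈ Xs
              · rw [hsold U u j, if_pos hj]
                exact (hv j hj).symm
              · rw [hsold U u j, if_neg hj,
                  hdep j (sold U u) v U U (u j)
                    (fun l hl => ih l (by have := Fin.lt_def.mp (hE l j hl); omega))
                    (fun c _ => rfl)]
                exact h j hj
        exact main n i i.isLt
    rw [hPdodef v]
    simp only [hQS]
    refine Finset.sum_congr rfl fun U _ => Finset.sum_congr rfl fun u _ => ?_
    have h2 : (∀ i : Fin n, (i : ℕ) < n → i ∉ Xs → f i v U (u i) = v i)
        ↔ (∀ i : Fin n, i ∉ Xs → f i v U (u i) = v i) := by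
      constructor
      · intro h i; exact h i i.isLt
      · intro h i _; exact h i
    refine if_congr ((hsold_iff U u).trans h2.symm) ?_ rfl
    simp [hA, hB]
  have hQSstep : ∀ i : Fin n, i ∈ Xs → QS ((i : ℕ) + 1) = QS (i : ℕ) := by
    intro i hi
    simp only [hQS]
    refine Finset.sum_congr rfl fun U _ => Finset.sum_congr rfl fun u _ => ?_
    refine if_congr ?_ rfl rfl
    constructor
    · intro h i' h1 h2
      exact h i' (by omega) h2
    · intro h i' h1 h2
      rcases Nat.lt_succ_iff_lt_or_eq.mp h1 with h' | h'
      · exact h i' h' h2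
      · exact absurd (Fin.ext h' ▸ hi) h2
  have hQXstep : ∀ i : Fin n, i ∉ Xs → QX ((i : ℕ) + 1) = QX (i : ℕ) := by
    intro i hi
    simp only [hQX]
    refine Finset.sum_congr rfl fun U _ => Finset.sum_congr rfl fun u _ => ?_
    refine if_congr ?_ rfl rfl
    constructor
    · intro h i' h1 h2
      exact h i' (by omega) h2
    · intro h i' h1 h2
      rcases Nat.lt_succ_iff_lt_or_eq.mp h1 with h' | h'
      · exact h i' h' h2
      · exact absurd (Fin.ext h' ▸ h2) hi
  have hMpos : ∀ k, 0 < M k := by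
    intro k
    simp only [hM]
    refine Finset.sum_pos' (fun w _ => ?_) ⟨v, Finset.mem_univ v, ?_⟩
    · by_cases h : ∀ j : Fin n, (j : ℕ) < k → w j = v j
      · rw [if_pos h]; exact (hpos w).le
      · rw [if_neg h]
    · rw [if_pos (fun j _ => rfl)]
      exact hpos v
  have hQSne : ∀ k, QS k ≠ 0 := by
    intro k
    have h := hMQ k
    have h2 := (hMpos k).ne'
    rw [h] at h2
    exact fun h0 => h2 (by rw [h0, zero_mul])
  have hQXne : ∀ k, QX k ≠ 0 := by
    intro k
    have h := hMQ k
    have h2 := (hMpos k).ne'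
    rw [h] at h2
    exact fun h0 => h2 (by rw [h0, mul_zero])
  have hNum : ∀ i : Fin n,
      (∑ w : ∀ i, X i, if (w i = v i ∧ ∀ j, j < i → w j = v j) then P w else 0)
        = M ((i : ℕ) + 1) := by
    intro i
    simp only [hM]
    refine Finset.sum_congr rfl fun w _ => ?_
    refine if_congr ?_ rfl rfl
    constructor
    · rintro ⟨h1, h2⟩ j hj
      rcases Nat.lt_succ_iff_lt_or_eq.mp hj with h' | h'
      · exact h2 j (Fin.lt_def.mpr h')
      · exact (Fin.ext h') ▸ h1
    · intro h
      exact ⟨h i (Nat.lt_succ_self _), fun j hj => h j (by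
        have := Fin.lt_def.mp hj; omega)⟩
  have hDen : ∀ i : Fin n,
      (∑ w : ∀ i, X i, if (∀ j, j < i → w j = v j) then P w else 0) = M (i : ℕ) := by
    intro i
    simp only [hM]
    refine Finset.sum_congr rfl fun w _ => ?_
    refine if_congr ?_ rfl rfl
    constructor <;> intro h j hj
    · exact h j (Fin.lt_def.mpr hj)
    · exact h j (Fin.lt_def.mp hj)
  calc Pdo v = QS n / QS 0 := by rw [hQS0, div_one, hPdoQS]
    _ = ∏ k ∈ Finset.range n, QS (k+1) / QS k := (tele_prod QS hQSne n).symm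
    _ = ∏ i : Fin n, QS ((i : ℕ) + 1) / QS (i : ℕ) :=
        (Fin.prod_univ_eq_prod_range (fun k => QS (k+1) / QS k) n).symm
    _ = ∏ i : Fin n, (if i ∉ Xs then M ((i:ℕ)+1) / M (i:ℕ) else 1) := by
        refine Finset.prod_congr rfl fun i _ => ?_
        by_cases h : i ∈ Xs
        · simp only [h, not_true_eq_false, if_false, hQSstep i h, div_self (hQSne _)]
        · simp only [h, not_false_eq_true, if_true, hMQ, hQXstep i h,
            mul_div_mul_right _ _ (hQXne (i:ℕ))]
    _ = ∏ i ∈ Finset.univ.filter (fun i => i ∉ Xs), M ((i:ℕ)+1) / M (i:ℕ) :=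
        (Finset.prod_filter _ _).symm
    _ = ∏ i ∈ Finset.univ.filter (fun i => i ∉ Xs),
        ((∑ w, if (w i = v i ∧ ∀ j, j < i → w j = v j) then P w else 0) /
         (∑ w, if (∀ j, j < i → w j = v j) then P w else 0)) := by
        refine Finset.prod_congr rfl fun i _ => ?_
        rw [hNum i, hDen i]
end
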